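/- In the q-shuffle algebra V, for all n ≥ 1: Σ_{k=0}^{n} q^{2k−n} G_k ⋆ G_{n−k} = Σ_{k=0}^{n} q^{n−2k} G_k ⋆ G_{n−k} = [2]_q^n y (xy+yx)^{n−1} x, where the right-hand side is computed in the free (concatenation) algebra. -/

import Mathlib

noncomputable section

/-- Words in the letters `x` (= `false`) and `y` (= `true`). -/
abbrev Wd := List Bool

/-- The underlying vector space of the free algebra `F⟨x,y⟩`,
with the words as a basis. -/
abbrev V (F : Type*) [Field F] := Wd →₀ F

/-- The pairing `⟨u,v⟩` on letters: `2` if equal, `-2` if distinct. -/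
def pr (a b : Bool) : ℤ := if a = b then 2 else -2

/-- `⟨u₁,b⟩ + ⟨u₂,b⟩ + ⋯ + ⟨u_r,b⟩` for a word `u` and a letter `b`. -/
def wsum (u : Wd) (b : Bool) : ℤ := (u.map fun a => pr a b).sum

variable {F : Type*} [Field F]

/-- Left multiplication by a letter, in the free (concatenation) algebra. -/
def lmul (a : Bool) (f : V F) : V F := Finsupp.mapDomain (fun w => a :: w) f

/-- The `q`-shuffle product of two words (as an element of `V F`), defined by
Rosso's recursion
`u ⋆ v = u₁((u₂⋯u_r) ⋆ v) + q^{⟨u₁,v₁⟩+⋯+⟨u_r,v₁⟩} v₁(u ⋆ (v₂⋯v_s))`. -/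
def sh (q : F) : Wd → Wd → V F
  | [], v => Finsupp.single v 1
  | u@(_ :: _), [] => Finsupp.single u 1
  | a :: u', b :: v' =>
      lmul a (sh q u' (b :: v')) +
        q ^ wsum (a :: u') b • lmul b (sh q (a :: u') v')
  termination_by u v => u.length + v.length
  decreasing_by all_goals (simp only [List.length_cons]; omega)

/-- The `q`-shuffle product on `V F`, extended bilinearly from words. -/
def st (q : F) (f g : V F) : V F :=
  f.sum fun u cu => g.sum fun v cv => (cu * cv) • sh q u v

/-- The concatenation (free-algebra) product on `V F`. -/
def cm (f g : V F) : V F :=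
  f.sum fun u cu => g.sum fun v cv => Finsupp.single (u ++ v) (cu * cv)

/-- Powers with respect to the concatenation product. -/
def cpow (f : V F) : ℕ → V F
  | 0 => Finsupp.single [] 1
  | n + 1 => cm f (cpow f n)

/-- The alternating word `W_{-k} = xyx⋯x` of length `2k+1`. -/
def altX : ℕ → Wd
  | 0 => [false]
  | k + 1 => false :: true :: altX k

/-- The alternating word `W_{k+1} = yxy⋯y` of length `2k+1`. -/
def altY : ℕ → Wd
  | 0 => [true]
  | k + 1 => true :: false :: altY k

/-- The alternating word `G_k = (yx)^k`. -/
def gw : ℕ → Wd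
  | 0 => []
  | k + 1 => true :: false :: gw k

/-- The alternating word `G̃_k = (xy)^k`. -/
def gtw : ℕ → Wd
  | 0 => []
  | k + 1 => false :: true :: gtw k

/-- `W_{-k}` as an element of `V F`. -/
def Wm (F : Type*) [Field F] (k : ℕ) : V F := Finsupp.single (altX k) 1

/-- `W_{k+1}` as an element of `V F`. -/
def Wp (F : Type*) [Field F] (k : ℕ) : V F := Finsupp.single (altY k) 1

/-- `G_k` as an element of `V F`. -/
def Gn (F : Type*) [Field F] (k : ℕ) : V F := Finsupp.single (gw k) 1

/-- `G̃_k` as an element of `V F`. -/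
def Gt (F : Type*) [Field F] (k : ℕ) : V F := Finsupp.single (gtw k) 1

/-!
Write `T_n(t) = Σ_k t^{2k-n} G_k ⋆ G_{n-k}` and let `Q_n, R_n, S_n` be the same sums with an `x`
prepended to the left factor, the right factor, or both. Splitting off the first letter with Rosso's
recursion expresses each of these through the others with one letter peeled off; the alternating
words `G_k` pair to `0` with every letter, so only a leading `x` contributes a power `q^{±2}`.
When `t + t⁻¹ = [2]_q` the mixed sums `Q, R` can be eliminated, leaving
`T_{n+2} = [2]_q yx T_{n+1} + q⁻¹[2]_q yy S_n` and `S_{n+1} = q[2]_q xx T_{n+1} + [2]_q xy S_n`,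
and induction gives `T_{n+1} = [2]_q^{n+1} y(xy+yx)^n x`. Both `t = q` and `t = q⁻¹` qualify.
-/

open Finset

section Concatenation

lemma lmul_add (a : Bool) (f g : V F) : lmul a (f + g) = lmul a f + lmul a g :=
  Finsupp.mapDomain_add

lemma lmul_smul (a : Bool) (c : F) (f : V F) : lmul a (c • f) = c • lmul a f :=
  Finsupp.mapDomain_smul _ _

lemma lmul_sum {ι : Type*} (a : Bool) (s : Finset ι) (g : ι → V F) :
    lmul a (∑ i ∈ s, g i) = ∑ i ∈ s, lmul a (g i) :=
  map_sum (Finsupp.mapDomain.addMonoidHom (a :: ·)) _ _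

lemma lmul_single (a : Bool) (w : Wd) (c : F) :
    lmul a (Finsupp.single w c) = Finsupp.single (a :: w) c :=
  Finsupp.mapDomain_single

lemma lmul_eq_cm (a : Bool) (f : V F) : lmul a f = cm (Finsupp.single [a] 1) f := by
  rw [cm, Finsupp.sum_single_index]
  · simp only [one_mul]; rfl
  · simp

-- Transported to `F[FreeMonoid Bool]`, `cm` and `cpow` inherit associativity and distributivity.
def toMonoidAlgebra (f : V F) : MonoidAlgebra F (FreeMonoid Bool) := MonoidAlgebra.ofCoeff f

lemma toMonoidAlgebra_injective : Function.Injective (toMonoidAlgebra (F := F)) :=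
  MonoidAlgebra.ofCoeff_injective

lemma toMonoidAlgebra_add (f g : V F) :
    toMonoidAlgebra (f + g) = toMonoidAlgebra f + toMonoidAlgebra g := rfl

lemma toMonoidAlgebra_smul (c : F) (f : V F) :
    toMonoidAlgebra (c • f) = c • toMonoidAlgebra f := rfl

lemma toMonoidAlgebra_cm (f g : V F) :
    toMonoidAlgebra (cm f g) = toMonoidAlgebra f * toMonoidAlgebra g := by
  apply MonoidAlgebra.coeff_injective
  rw [MonoidAlgebra.mul_def]
  simp only [MonoidAlgebra.coeff_finsuppSum, MonoidAlgebra.coeff_single]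
  rfl

lemma toMonoidAlgebra_cpow (f : V F) (n : ℕ) :
    toMonoidAlgebra (cpow f n) = toMonoidAlgebra f ^ n := by
  induction n with
  | zero => rfl
  | succ n ih => rw [cpow, toMonoidAlgebra_cm, ih, pow_succ']

def letter (a : Bool) : MonoidAlgebra F (FreeMonoid Bool) :=
  MonoidAlgebra.single (FreeMonoid.of a) 1

lemma toMonoidAlgebra_lmul (a : Bool) (f : V F) :
    toMonoidAlgebra (lmul a f) = letter a * toMonoidAlgebra f := by
  rw [lmul_eq_cm, toMonoidAlgebra_cm]; rfl

lemma toMonoidAlgebra_Wm_zero : toMonoidAlgebra (Wm F 0) = letter false := rfl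

lemma toMonoidAlgebra_Wp_zero : toMonoidAlgebra (Wp F 0) = letter true := rfl

lemma toMonoidAlgebra_Gt_one_add_Gn_one :
    toMonoidAlgebra (Gt F 1 + Gn F 1) =
      letter false * letter true + letter true * letter false := by
  simp only [letter, MonoidAlgebra.single_mul_single, one_mul]
  rfl

end Concatenation

section Shuffle

variable (q : F)

lemma sh_nil_left (v : Wd) : sh q [] v = Finsupp.single v 1 := by
  rw [sh]

lemma sh_nil_right (u : Wd) : sh q u [] = Finsupp.single u 1 := by
  cases u <;> rw [sh]

lemma sh_cons_cons (a b : Bool) (u v : Wd) :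
    sh q (a :: u) (b :: v) =
      lmul a (sh q u (b :: v)) + q ^ wsum (a :: u) b • lmul b (sh q (a :: u) v) := by
  rw [sh]

lemma st_single_single (u v : Wd) :
    st q (Finsupp.single u 1) (Finsupp.single v 1) = sh q u v := by
  simp [st]

lemma gw_succ (k : ℕ) : gw (k + 1) = true :: false :: gw k := rfl

lemma wsum_cons (a : Bool) (u : Wd) (b : Bool) : wsum (a :: u) b = pr a b + wsum u b := by
  simp [wsum]

lemma wsum_gw (k : ℕ) (b : Bool) : wsum (gw k) b = 0 := by
  induction k with
  | zero => rfl
  | succ k ih => rw [gw, wsum_cons, wsum_cons, ih]; cases b <;> rfl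

lemma sh_gw_succ_cons (k : ℕ) (b : Bool) (v : Wd) :
    sh q (gw (k + 1)) (b :: v) =
      lmul true (sh q (false :: gw k) (b :: v)) + lmul b (sh q (gw (k + 1)) v) := by
  rw [gw, sh_cons_cons, ← gw, wsum_gw, zpow_zero, one_smul]

lemma sh_false_gw_cons (k : ℕ) (b : Bool) (v : Wd) :
    sh q (false :: gw k) (b :: v) =
      lmul false (sh q (gw k) (b :: v)) + q ^ pr false b • lmul b (sh q (false :: gw k) v) := by
  rw [sh_cons_cons, wsum_cons, wsum_gw, add_zero]

end Shuffle

section WeightedSums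

variable (q t : F)

-- With `u, v ∈ {[], [false]}` these are the sums `T_n, Q_n, R_n, S_n` of the header.
def shuffleSum (u v : Wd) (n : ℕ) : V F :=
  ∑ k ∈ range (n + 1), t ^ (2 * (k : ℤ) - n) • sh q (u ++ gw k) (v ++ gw (n - k))

variable {t}

lemma shuffleSum_cons_cons (n : ℕ) :
    shuffleSum q t [false] [false] n =
      lmul false (shuffleSum q t [] [false] n) +
        q ^ (2 : ℤ) • lmul false (shuffleSum q t [false] [] n) := by
  simp only [shuffleSum, lmul_sum, smul_sum, ← sum_add_distrib]
  refine sum_congr rfl fun k _ => ?_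
  simp only [List.singleton_append, List.nil_append, sh_false_gw_cons, smul_add, lmul_smul]
  rw [smul_comm (t ^ _) (q ^ _)]
  rfl

lemma shuffleSum_cons_nil_succ (ht : t ≠ 0) (n : ℕ) :
    shuffleSum q t [false] [] (n + 1) =
      lmul false (shuffleSum q t [] [] (n + 1)) +
        (q ^ (-2 : ℤ) * t⁻¹) • lmul true (shuffleSum q t [false] [false] n) := by
  simp only [shuffleSum, sum_range_succ _ (n + 1), lmul_add, lmul_sum, smul_sum,
    List.singleton_append, List.nil_append]
  have hlast : sh q (false :: gw (n + 1)) (gw (n + 1 - (n + 1))) =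
      lmul false (sh q (gw (n + 1)) (gw (n + 1 - (n + 1)))) := by
    rw [Nat.sub_self, gw, sh_nil_right, sh_nil_right, lmul_single]
  have hterm : ∀ k ∈ range (n + 1),
      t ^ (2 * (k : ℤ) - (n + 1 : ℕ)) • sh q (false :: gw k) (gw (n + 1 - k)) =
        lmul false (t ^ (2 * (k : ℤ) - (n + 1 : ℕ)) • sh q (gw k) (gw (n + 1 - k))) +
          (q ^ (-2 : ℤ) * t⁻¹) •
            lmul true (t ^ (2 * (k : ℤ) - n) • sh q (false :: gw k) (false :: gw (n - k))) := by
    intro k hk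
    rw [show n + 1 - k = n - k + 1 by grind, gw, sh_false_gw_cons, smul_add, lmul_smul,
      lmul_smul, smul_smul, smul_smul]
    congr 2
    rw [show pr false true = -2 from rfl, mul_comm, mul_assoc, ← zpow_neg_one, ← zpow_add₀ ht]
    congr 2
    push_cast; ring
  rw [sum_congr rfl hterm, sum_add_distrib, hlast, lmul_smul]
  abel

lemma shuffleSum_nil_cons_succ (ht : t ≠ 0) (n : ℕ) :
    shuffleSum q t [] [false] (n + 1) =
      lmul false (shuffleSum q t [] [] (n + 1)) +
        t • lmul true (shuffleSum q t [false] [false] n) := by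
  simp only [shuffleSum, sum_range_succ' _ (n + 1), lmul_add, lmul_sum, smul_sum,
    List.singleton_append, List.nil_append, Nat.add_sub_add_right, Nat.sub_zero]
  have hfirst : sh q (gw 0) (false :: gw (n + 1)) = lmul false (sh q (gw 0) (gw (n + 1))) := by
    rw [gw, sh_nil_left, sh_nil_left, lmul_single]
  have hterm : ∀ k ∈ range (n + 1),
      t ^ (2 * ((k + 1 : ℕ) : ℤ) - (n + 1 : ℕ)) • sh q (gw (k + 1)) (false :: gw (n - k)) =
        lmul false
            (t ^ (2 * ((k + 1 : ℕ) : ℤ) - (n + 1 : ℕ)) • sh q (gw (k + 1)) (gw (n - k))) +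
          t • lmul true
            (t ^ (2 * (k : ℤ) - n) • sh q (false :: gw k) (false :: gw (n - k))) := by
    intro k _
    rw [sh_gw_succ_cons, smul_add, add_comm, lmul_smul, lmul_smul, smul_smul,
      ← zpow_one_add₀ ht]
    congr 3
    push_cast; ring
  rw [sum_congr rfl hterm, sum_add_distrib, hfirst, lmul_smul]
  abel

lemma shuffleSum_nil_nil_succ (ht : t ≠ 0) (n : ℕ) :
    shuffleSum q t [] [] (n + 1) =
      t • lmul true (shuffleSum q t [false] [] n) +
        t⁻¹ • lmul true (shuffleSum q t [] [false] n) := by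
  rw [shuffleSum, sum_range_succ', sum_range_succ, shuffleSum, sum_range_succ, shuffleSum,
    sum_range_succ']
  simp only [lmul_add, lmul_sum, smul_sum, smul_add, List.singleton_append, List.nil_append,
    Nat.add_sub_add_right, Nat.sub_zero]
  have hterm : ∀ k ∈ range n,
      t ^ (2 * ((k + 1 : ℕ) : ℤ) - (n + 1 : ℕ)) • sh q (gw (k + 1)) (gw (n - k)) =
        t • lmul true (t ^ (2 * (k : ℤ) - n) • sh q (false :: gw k) (gw (n - k))) +
          t⁻¹ • lmul true (t ^ (2 * ((k + 1 : ℕ) : ℤ) - n) •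
            sh q (gw (k + 1)) (false :: gw (n - (k + 1)))) := by
    intro k hk
    rw [show n - k = n - (k + 1) + 1 by grind, gw_succ (n - (k + 1)), sh_gw_succ_cons, smul_add,
      lmul_smul, lmul_smul, smul_smul, smul_smul, ← zpow_one_add₀ ht, ← zpow_neg_one,
      ← zpow_add₀ ht]
    congr 3 <;> push_cast <;> ring
  have hlast : t ^ (2 * ((n + 1 : ℕ) : ℤ) - (n + 1 : ℕ)) • sh q (gw (n + 1)) (gw (n - n)) =
      t • lmul true (t ^ (2 * (n : ℤ) - n) • sh q (false :: gw n) (gw (n - n))) := by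
    rw [Nat.sub_self, gw, sh_nil_right, sh_nil_right, lmul_smul, lmul_single, smul_smul,
      ← zpow_one_add₀ ht]
    congr 2
    push_cast; ring
  have hfirst : t ^ (2 * ((0 : ℕ) : ℤ) - (n + 1 : ℕ)) • sh q (gw 0) (gw (n + 1)) =
      t⁻¹ • lmul true (t ^ (2 * ((0 : ℕ) : ℤ) - n) • sh q (gw 0) (false :: gw n)) := by
    rw [gw, sh_nil_left, sh_nil_left, lmul_smul, lmul_single, smul_smul, ← zpow_neg_one,
      ← zpow_add₀ ht]
    congr 2
    push_cast; ring
  rw [sum_congr rfl hterm, sum_add_distrib, hlast, hfirst]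
  abel

lemma shuffleSum_nil_nil_succ_succ (hq : q ≠ 0) (ht₀ : t ≠ 0) (ht : t + t⁻¹ = q + q⁻¹)
    (n : ℕ) :
    shuffleSum q t [] [] (n + 2) =
      (q + q⁻¹) • lmul true (lmul false (shuffleSum q t [] [] (n + 1))) +
        (q⁻¹ * (q + q⁻¹)) • lmul true (lmul true (shuffleSum q t [false] [false] n)) := by
  rw [shuffleSum_nil_nil_succ q ht₀, shuffleSum_cons_nil_succ q ht₀,
    shuffleSum_nil_cons_succ q ht₀]
  simp only [lmul_add, lmul_smul, smul_add, smul_smul]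
  match_scalars
  · linear_combination ht
  · field_simp
    ring

lemma shuffleSum_cons_cons_succ (hq : q ≠ 0) (ht₀ : t ≠ 0) (ht : t + t⁻¹ = q + q⁻¹)
    (n : ℕ) :
    shuffleSum q t [false] [false] (n + 1) =
      (q * (q + q⁻¹)) • lmul false (lmul false (shuffleSum q t [] [] (n + 1))) +
        (q + q⁻¹) • lmul false (lmul true (shuffleSum q t [false] [false] n)) := by
  rw [shuffleSum_cons_cons, shuffleSum_cons_nil_succ q ht₀, shuffleSum_nil_cons_succ q ht₀]
  simp only [lmul_add, lmul_smul, smul_add, smul_smul]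
  match_scalars
  · field_simp
    ring
  · rw [← ht]
    field_simp

local notation "𝒙" => letter false
local notation "𝒚" => letter true

lemma shuffleSum_cons_nil_zero : shuffleSum q t [false] [] 0 = Wm F 0 := by
  simp [shuffleSum, gw, sh_nil_right, Wm, altX]

lemma shuffleSum_nil_cons_zero : shuffleSum q t [] [false] 0 = Wm F 0 := by
  simp [shuffleSum, gw, sh_nil_left, Wm, altX]

theorem toMonoidAlgebra_shuffleSum (hq : q ≠ 0) (ht₀ : t ≠ 0) (ht : t + t⁻¹ = q + q⁻¹)
    (n : ℕ) :
    toMonoidAlgebra (shuffleSum q t [] [] (n + 1)) =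
        (q + q⁻¹) ^ (n + 1) • (𝒚 * ((𝒙 * 𝒚 + 𝒚 * 𝒙) ^ n * 𝒙)) ∧
      toMonoidAlgebra (shuffleSum q t [false] [false] n) =
        (q * (q + q⁻¹) ^ (n + 1)) • (𝒙 * ((𝒙 * 𝒚 + 𝒚 * 𝒙) ^ n * 𝒙)) := by
  induction n with
  | zero =>
    rw [shuffleSum_nil_nil_succ q ht₀, shuffleSum_cons_cons]
    simp only [toMonoidAlgebra_add, toMonoidAlgebra_smul, toMonoidAlgebra_lmul,
      shuffleSum_cons_nil_zero, shuffleSum_nil_cons_zero, toMonoidAlgebra_Wm_zero, pow_zero,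
      one_mul, zero_add, pow_one]
    constructor
    · rw [← add_smul, ht]
    · match_scalars
      field_simp
      ring
  | succ n ih =>
    rw [shuffleSum_nil_nil_succ_succ q hq ht₀ ht, shuffleSum_cons_cons_succ q hq ht₀ ht]
    simp only [toMonoidAlgebra_add, toMonoidAlgebra_smul, toMonoidAlgebra_lmul, ih.1, ih.2]
    generalize q + q⁻¹ = c
    simp only [pow_succ' _ n, mul_add, add_mul, mul_assoc, mul_smul_comm, smul_smul]
    constructor <;> match_scalars <;> field_simp <;> ring

end WeightedSums

theorem stmt_12_general {F : Type*} [Field F] (q : F) (hq : q ≠ 0)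
    (n : ℕ) (hn : 1 ≤ n) :
    (∑ k ∈ Finset.range (n + 1),
        q ^ (2 * (k : ℤ) - (n : ℤ)) • st q (Gn F k) (Gn F (n - k)))
      = (∑ k ∈ Finset.range (n + 1),
          q ^ ((n : ℤ) - 2 * (k : ℤ)) • st q (Gn F k) (Gn F (n - k))) ∧
    (∑ k ∈ Finset.range (n + 1),
        q ^ (2 * (k : ℤ) - (n : ℤ)) • st q (Gn F k) (Gn F (n - k)))
      = ((q + q⁻¹) ^ n) •
          cm (Wp F 0) (cm (cpow (Gt F 1 + Gn F 1) (n - 1)) (Wm F 0)) := by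
  obtain ⟨m, rfl⟩ : ∃ m, n = m + 1 := ⟨n - 1, by omega⟩
  have hsum (t : F) : ∑ k ∈ range (m + 1 + 1),
      t ^ (2 * (k : ℤ) - (m + 1 : ℕ)) • st q (Gn F k) (Gn F (m + 1 - k)) =
        shuffleSum q t [] [] (m + 1) :=
    sum_congr rfl fun k _ => by rw [Gn, Gn, st_single_single]; rfl
  have hsum_inv : ∑ k ∈ range (m + 1 + 1),
      q ^ (((m + 1 : ℕ) : ℤ) - 2 * k) • st q (Gn F k) (Gn F (m + 1 - k)) =
        shuffleSum q q⁻¹ [] [] (m + 1) := by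
    simp only [← hsum, inv_zpow', neg_sub]
  have hq_inv : q⁻¹ + q⁻¹⁻¹ = q + q⁻¹ := by rw [inv_inv, add_comm]
  rw [hsum, hsum_inv, Nat.add_sub_cancel]
  refine ⟨toMonoidAlgebra_injective ?_, toMonoidAlgebra_injective ?_⟩
  · rw [(toMonoidAlgebra_shuffleSum q hq (inv_ne_zero hq) hq_inv m).1,
      (toMonoidAlgebra_shuffleSum q hq hq rfl m).1]
  · rw [(toMonoidAlgebra_shuffleSum q hq hq rfl m).1, toMonoidAlgebra_smul, toMonoidAlgebra_cm,
      toMonoidAlgebra_cm, toMonoidAlgebra_cpow, toMonoidAlgebra_Wp_zero, toMonoidAlgebra_Wm_zero,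
      toMonoidAlgebra_Gt_one_add_Gn_one]

/-- For `n ≥ 1`: `Σ_{k=0}^n q^{2k−n} G_k ⋆ G_{n−k} = Σ_{k=0}^n q^{n−2k} G_k ⋆ G_{n−k}
= [2]_q^n y(xy+yx)^{n−1}x`. -/
theorem stmt_12 {F : Type*} [Field F] (q : F) (hq : q ≠ 0)
    (hq' : ∀ n : ℕ, 0 < n → q ^ n ≠ 1) (n : ℕ) (hn : 1 ≤ n) :
    (∑ k ∈ Finset.range (n + 1),
        q ^ (2 * (k : ℤ) - (n : ℤ)) • st q (Gn F k) (Gn F (n - k)))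
      = (∑ k ∈ Finset.range (n + 1),
          q ^ ((n : ℤ) - 2 * (k : ℤ)) • st q (Gn F k) (Gn F (n - k))) ∧
    (∑ k ∈ Finset.range (n + 1),
        q ^ (2 * (k : ℤ) - (n : ℤ)) • st q (Gn F k) (Gn F (n - k)))
      = ((q + q⁻¹) ^ n) •
          cm (Wp F 0) (cm (cpow (Gt F 1 + Gn F 1) (n - 1)) (Wm F 0)) :=
  stmt_12_general q hq n hn
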